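/- A unimodular system Ω contains m mutually equal elements ξ_1 = … = ξ_m (up to sign) if and only if the lattice L_{Ω^⊥} = W_Ω^⊥ ∩ ℤ^N of the Gale dual system contains a root sublattice of type A_{m−1}. In particular, Ω has no repeated elements iff L_{Ω^⊥} contains no vector of squared length 2. -/
import Mathlib


/-- `S` is a maximal linearly independent subset of the family of forms `ξ`. -/
def MaxLinIndep {ι : Type*} {U : Type*} [AddCommGroup U] [Module ℝ U]
    (ξ : ι → Module.Dual ℝ U) (S : Set ι) : Prop :=
  LinearIndependent ℝ (fun i : S => ξ i) ∧
    ∀ T : Set ι, S ⊆ T → LinearIndependent ℝ (fun i : T => ξ i) → T = S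

/-- A unimodular system: nonzero forms spanning `U*` such that every maximal linearly
independent subset generates the same abelian group `M` over `ℤ`. -/
def IsUnimodularSystem {ι : Type*} {U : Type*} [AddCommGroup U] [Module ℝ U]
    (ξ : ι → Module.Dual ℝ U) (M : Submodule ℤ (Module.Dual ℝ U)) : Prop :=
  (∀ k, ξ k ≠ 0) ∧ Submodule.span ℝ (Set.range ξ) = ⊤ ∧
    ∀ S : Set ι, MaxLinIndep ξ S → Submodule.span ℤ (ξ '' S) = M

/-- The `ℤ`-submodule of integer points of `ι → ℝ`. -/
def intPts (ι : Type*) : Submodule ℤ (ι → ℝ) where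
  carrier := {x | ∀ k, ∃ z : ℤ, x k = z}
  zero_mem' := fun k => ⟨0, by simp⟩
  add_mem' := by
    rintro a b ha hb k
    obtain ⟨z, hz⟩ := ha k; obtain ⟨w, hw⟩ := hb k
    exact ⟨z + w, by simp [hz, hw]⟩
  smul_mem' := by
    rintro c a ha k
    obtain ⟨z, hz⟩ := ha k
    exact ⟨c * z, by simp [hz, zsmul_eq_mul]⟩

/-- The evaluation map `Φ : U → ℝᴺ`, `Φ(u) = (ξ₁(u), …, ξ_N(u))`. -/
noncomputable def PhiMap {N : ℕ} {U : Type*} [AddCommGroup U] [Module ℝ U]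
    (ξ : Fin N → Module.Dual ℝ U) : U →ₗ[ℝ] (Fin N → ℝ) :=
  LinearMap.pi fun k => ξ k
/-- The orthogonal complement of a subspace of `ℝᴺ` for the standard inner product. -/
def perp {N : ℕ} (W : Submodule ℝ (Fin N → ℝ)) : Submodule ℝ (Fin N → ℝ) where
  carrier := {z | ∀ w ∈ W, ∑ k, w k * z k = 0}
  zero_mem' := by intro w _; simp
  add_mem' := by
    intro a b ha hb w hw
    have h : ∀ k ∈ Finset.univ, w k * (a + b) k = w k * a k + w k * b k :=
      fun k _ => by simp [mul_add]
    rw [Finset.sum_congr rfl h, Finset.sum_add_distrib, ha w hw, hb w hw, add_zero]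
  smul_mem' := by
    intro c a ha w hw
    have h : ∀ k ∈ Finset.univ, w k * (c • a) k = c * (w k * a k) := fun k _ => by
      simp [Pi.smul_apply, smul_eq_mul]; ring
    rw [Finset.sum_congr rfl h, ← Finset.mul_sum, ha w hw, mul_zero]


section aux
variable {N : ℕ} {U : Type*} [AddCommGroup U] [Module ℝ U]

lemma mem_perp_iff (ξ : Fin N → Module.Dual ℝ U) (z : Fin N → ℝ) :
    z ∈ perp (LinearMap.range (PhiMap ξ)) ↔ ∀ u : U, ∑ k, ξ k u * z k = 0 := by
  constructor
  · intro h u; exact h _ ⟨u, rfl⟩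
  · rintro h w ⟨u, rfl⟩; exact h u

lemma sum_support_pair {a b : Fin N} (hab : a ≠ b) (x y : Fin N → ℝ)
    (hsupp : ∀ k, k ≠ a → k ≠ b → x k = 0) :
    ∑ k, y k * x k = y a * x a + y b * x b := by
  rw [← Finset.sum_subset (Finset.subset_univ ({a, b} : Finset (Fin N)))]
  · rw [Finset.sum_pair hab]
  · intro k _ hk
    simp only [Finset.mem_insert, Finset.mem_singleton, not_or] at hk
    rw [hsupp k hk.1 hk.2, mul_zero]

lemma normTwo (x : Fin N → ℝ) (hint : ∀ k, ∃ z : ℤ, x k = z)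
    (h2 : ∑ k, x k * x k = 2) :
    ∃ a b, a ≠ b ∧ (x a = 1 ∨ x a = -1) ∧ (x b = 1 ∨ x b = -1) ∧
      ∀ k, k ≠ a → k ≠ b → x k = 0 := by
  choose z hz using hint
  have hz2 : ∑ k, z k * z k = 2 := by
    have : ((∑ k, z k * z k : ℤ) : ℝ) = 2 := by
      push_cast
      rw [← h2]
      exact Finset.sum_congr rfl fun k _ => by rw [hz k]
    exact_mod_cast this
  have hb : ∀ k, z k = -1 ∨ z k = 0 ∨ z k = 1 := by
    intro k
    have h1 : z k * z k ≤ 2 := by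
      rw [← hz2]
      exact Finset.single_le_sum (f := fun k => z k * z k)
        (fun j _ => mul_self_nonneg _) (Finset.mem_univ k)
    have h2' : -1 ≤ z k := by nlinarith
    have h3' : z k ≤ 1 := by nlinarith
    omega
  have hcard : (Finset.univ.filter (fun k => z k ≠ 0)).card = 2 := by
    have : ∑ k, z k * z k = ∑ k, (if z k ≠ 0 then (1 : ℤ) else 0) := by
      refine Finset.sum_congr rfl fun k _ => ?_
      rcases hb k with h | h | h <;> simp [h]
    rw [this, Finset.sum_boole] at hz2
    exact_mod_cast hz2
  obtain ⟨a, b, hab, hset⟩ := Finset.card_eq_two.mp hcard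
  have ha : z a ≠ 0 := by
    have : a ∈ Finset.univ.filter (fun k => z k ≠ 0) := by rw [hset]; simp
    simpa using this
  have hbb : z b ≠ 0 := by
    have : b ∈ Finset.univ.filter (fun k => z k ≠ 0) := by rw [hset]; simp
    simpa using this
  refine ⟨a, b, hab, ?_, ?_, ?_⟩
  · rcases hb a with h | h | h <;> simp [hz a, h] at ha ⊢
  · rcases hb b with h | h | h <;> simp [hz b, h] at hbb ⊢
  · intro k hka hkb
    have : k ∉ Finset.univ.filter (fun k => z k ≠ 0) := by
      rw [hset]; simp [hka, hkb]
    simp only [Finset.mem_filter, Finset.mem_univ, true_and, not_not] at this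
    rw [hz k, this]; exact Int.cast_zero

end aux

section aux2
variable {N : ℕ} {U : Type*} [AddCommGroup U] [Module ℝ U]

lemma pairRelScalar (ξ : Fin N → Module.Dual ℝ U) {x : Fin N → ℝ} {a b : Fin N} (hab : a ≠ b)
    (hp : x ∈ perp (LinearMap.range (PhiMap ξ)))
    (hsupp : ∀ k, k ≠ a → k ≠ b → x k = 0) (ha : x a = 1 ∨ x a = -1) :
    ∀ u, ξ a u = (-(x a * x b)) * ξ b u := by
  intro u
  have h := (mem_perp_iff ξ x).mp hp u
  rw [sum_support_pair hab x (fun k => ξ k u) hsupp] at h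
  rcases ha with h1 | h1 <;> rw [h1] at h ⊢ <;> nlinarith [h]

lemma pairRel (ξ : Fin N → Module.Dual ℝ U) {x : Fin N → ℝ} {a b : Fin N} (hab : a ≠ b)
    (hp : x ∈ perp (LinearMap.range (PhiMap ξ)))
    (hsupp : ∀ k, k ≠ a → k ≠ b → x k = 0)
    (ha : x a = 1 ∨ x a = -1) (hb : x b = 1 ∨ x b = -1) :
    ξ a = ξ b ∨ ξ a = - ξ b := by
  have h := pairRelScalar ξ hab hp hsupp ha
  rcases ha with h1 | h1 <;> rcases hb with h2 | h2
  · right; ext u; have := h u; rw [h1, h2] at this; simpa using this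
  · left; ext u; have := h u; rw [h1, h2] at this; simpa using this
  · left; ext u; have := h u; rw [h1, h2] at this; simpa using this
  · right; ext u; have := h u; rw [h1, h2] at this; simpa using this

lemma dot_single (p p' : Fin N) (α α' : ℝ) :
    ∑ k, (if k = p then α else 0) * (if k = p' then α' else 0) =
      if p = p' then α * α' else 0 := by
  have : ∀ k, (if k = p then α else 0) * (if k = p' then α' else 0) =
      if k = p then (α * if p = p' then α' else 0) else 0 := by
    intro k
    by_cases h : k = p
    · subst h; by_cases h' : k = p' <;> simp [h']
    · simp [h]
  rw [Finset.sum_congr rfl fun k _ => this k, Finset.sum_ite_eq' Finset.univ p]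
  simp

lemma dot_two (p q p' q' : Fin N) (α β α' β' : ℝ) :
    ∑ k, ((if k = p then α else 0) + (if k = q then β else 0)) *
         ((if k = p' then α' else 0) + (if k = q' then β' else 0)) =
      (if p = p' then α * α' else 0) + (if p = q' then α * β' else 0) +
      (if q = p' then β * α' else 0) + (if q = q' then β * β' else 0) := by
  have : ∀ k, ((if k = p then α else 0) + (if k = q then β else 0)) *
         ((if k = p' then α' else 0) + (if k = q' then β' else 0)) =
      (if k = p then α else 0) * (if k = p' then α' else 0) +
      (if k = p then α else 0) * (if k = q' then β' else 0) +
      (if k = q then β else 0) * (if k = p' then α' else 0) +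
      (if k = q then β else 0) * (if k = q' then β' else 0) := fun k => by ring
  rw [Finset.sum_congr rfl fun k _ => this k]
  simp only [Finset.sum_add_distrib, dot_single]

lemma eval_two (y : Fin N → ℝ) (p q : Fin N) (α β : ℝ) (hpq : p ≠ q) :
    ∑ k, y k * ((if k = p then α else 0) + (if k = q then β else 0)) =
      y p * α + y q * β := by
  have : ∀ k, y k * ((if k = p then α else 0) + (if k = q then β else 0)) =
      (if k = p then y k * α else 0) + (if k = q then y k * β else 0) := by
    intro k
    by_cases h : k = p
    · subst h
      have : k ≠ q := hpq
      simp [this]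
    · by_cases h' : k = q <;> simp [h, h', Ne.symm hpq]
  rw [Finset.sum_congr rfl fun k _ => this k, Finset.sum_add_distrib,
    Finset.sum_ite_eq' Finset.univ p, Finset.sum_ite_eq' Finset.univ q]
  simp

end aux2

section fwd
variable {N : ℕ} {U : Type*} [AddCommGroup U] [Module ℝ U]

lemma forward1 {m : ℕ} (hm : 2 ≤ m) (ξ : Fin N → Module.Dual ℝ U)
    (g : Fin m → Fin N) (hg : Function.Injective g)
    (hrel : ∀ a b, ξ (g a) = ξ (g b) ∨ ξ (g a) = - ξ (g b)) :
    ∃ w : Fin (m - 1) → (Fin N → ℝ),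
      (∀ i, w i ∈ perp (LinearMap.range (PhiMap ξ)) ∧ ∀ k, ∃ z : ℤ, w i k = z) ∧
      ∀ i j : Fin (m - 1), ∑ k, w i k * w j k =
        if i = j then 2
        else if ((i : ℤ) - (j : ℤ) = 1 ∨ (j : ℤ) - (i : ℤ) = 1) then -1 else 0 := by
  classical
  set o : Fin m := ⟨0, by omega⟩ with ho
  set t : ℕ → ℤ := fun a => if h : a < m then (if ξ (g ⟨a, h⟩) = ξ (g o) then 1 else -1) else 1
    with htdef
  have hts : ∀ (a : ℕ) (h : a < m), (t a : ℝ) • ξ (g ⟨a, h⟩) = ξ (g o) := by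
    intro a h
    by_cases h' : ξ (g ⟨a, h⟩) = ξ (g o)
    · simp [htdef, h, h']
    · rcases hrel ⟨a, h⟩ o with h2 | h2
      · exact absurd h2 h'
      · have ht : t a = -1 := by simp [htdef, h, h']
        rw [ht, h2]
        push_cast
        simp
  have htt : ∀ a : ℕ, (t a : ℝ) * (t a : ℝ) = 1 := by
    intro a
    rcases Nat.lt_or_ge a m with h | h
    · by_cases h' : ξ (g ⟨a, h⟩) = ξ (g o) <;> simp [htdef, h, h'] <;> norm_num
    · simp [htdef, Nat.not_lt.mpr h]
  have hlt : ∀ i : Fin (m - 1), i.val < m := fun i => by have := i.isLt; omega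
  have hlt' : ∀ i : Fin (m - 1), i.val + 1 < m := fun i => by have := i.isLt; omega
  have hcd : ∀ i : Fin (m-1), g ⟨i.val, hlt i⟩ ≠ g ⟨i.val + 1, hlt' i⟩ := by
    intro i h
    have := hg h
    simp [Fin.ext_iff] at this
  refine ⟨fun i k => (if k = g ⟨i.val, hlt i⟩ then (t i.val : ℝ) else 0) +
      (if k = g ⟨i.val + 1, hlt' i⟩ then -(t (i.val + 1) : ℝ) else 0), fun i => ⟨?_, ?_⟩, ?_⟩
  · rw [mem_perp_iff]
    intro u
    rw [eval_two (fun k => ξ k u) _ _ _ _ (hcd i)]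
    have h1 := congrArg (fun f : Module.Dual ℝ U => f u) (hts i.val (hlt i))
    have h2 := congrArg (fun f : Module.Dual ℝ U => f u) (hts (i.val + 1) (hlt' i))
    simp only [LinearMap.smul_apply, smul_eq_mul] at h1 h2
    ring_nf
    ring_nf at h1 h2
    linarith
  · intro k
    refine ⟨(if k = g ⟨i.val, hlt i⟩ then t i.val else 0) +
      (if k = g ⟨i.val + 1, hlt' i⟩ then -(t (i.val + 1)) else 0), ?_⟩
    push_cast
    rfl
  · intro i j
    rw [dot_two]
    have hgi : ∀ x y : Fin m, (g x = g y) = (x.val = y.val) := by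
      intro x y
      simp [hg.eq_iff, Fin.ext_iff]
    simp only [hgi]
    by_cases hij : i = j
    · subst hij
      rw [if_pos rfl, if_pos rfl, if_neg (by omega), if_neg (by omega), if_pos rfl]
      nlinarith [htt i.val, htt (i.val + 1)]
    · have hij' : i.val ≠ j.val := fun h => hij (Fin.ext h)
      rw [if_neg hij]
      by_cases h1 : i.val = j.val + 1
      · rw [if_neg hij', if_pos h1, if_neg (by omega), if_neg (by omega)]
        rw [if_pos (by left; push_cast; omega)]
        rw [h1]
        nlinarith [htt (j.val + 1)]
      · by_cases h2 : i.val + 1 = j.val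
        · rw [if_neg hij', if_neg h1, if_pos h2, if_neg (by omega)]
          rw [if_pos (by right; push_cast; omega)]
          rw [h2]
          nlinarith [htt j.val]
        · rw [if_neg hij', if_neg h1, if_neg h2, if_neg (by omega)]
          rw [if_neg (by push_cast; omega)]
          ring

end fwd

section part2
variable {N : ℕ} {U : Type*} [AddCommGroup U] [Module ℝ U]

lemma part2 (ξ : Fin N → Module.Dual ℝ U) :
    (∀ a b : Fin N, a ≠ b → ξ a ≠ ξ b ∧ ξ a ≠ - ξ b) ↔
      ¬ ∃ x : Fin N → ℝ, x ∈ perp (LinearMap.range (PhiMap ξ)) ∧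
          (∀ k, ∃ z : ℤ, x k = z) ∧ ∑ k, x k ^ 2 = 2 := by
  constructor
  · rintro h ⟨x, hp, hint, h2⟩
    have h2' : ∑ k, x k * x k = 2 := by
      rw [← h2]; exact Finset.sum_congr rfl fun k _ => (sq (x k)).symm ▸ by ring
    obtain ⟨a, b, hab, ha, hb, hsupp⟩ := normTwo x hint h2'
    rcases pairRel ξ hab hp hsupp ha hb with hr | hr
    · exact (h a b hab).1 hr
    · exact (h a b hab).2 hr
  · intro h a b hab
    constructor
    · intro he
      apply h
      refine ⟨fun k => (if k = a then 1 else 0) + (if k = b then (-1 : ℝ) else 0), ?_, ?_, ?_⟩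
      · rw [mem_perp_iff]
        intro u
        rw [eval_two (fun k => ξ k u) _ _ _ _ hab]
        have := congrArg (fun f : Module.Dual ℝ U => f u) he
        simp at this ⊢
        linarith
      · intro k
        refine ⟨(if k = a then 1 else 0) + (if k = b then (-1 : ℤ) else 0), ?_⟩
        push_cast
        rfl
      · have : ∀ k : Fin N, ((if k = a then (1:ℝ) else 0) + (if k = b then (-1:ℝ) else 0)) ^ 2
            = (if k = a then (1:ℝ) else 0) + (if k = b then (1:ℝ) else 0) := by
          intro k
          by_cases h1 : k = a
          · subst h1; have : k ≠ b := hab; simp [this]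
          · by_cases h2 : k = b <;> simp [h1, h2, Ne.symm hab]
        rw [Finset.sum_congr rfl fun k _ => this k, Finset.sum_add_distrib,
          Finset.sum_ite_eq' Finset.univ a, Finset.sum_ite_eq' Finset.univ b]
        norm_num
    · intro he
      apply h
      refine ⟨fun k => (if k = a then 1 else 0) + (if k = b then (1 : ℝ) else 0), ?_, ?_, ?_⟩
      · rw [mem_perp_iff]
        intro u
        rw [eval_two (fun k => ξ k u) _ _ _ _ hab]
        have := congrArg (fun f : Module.Dual ℝ U => f u) he
        simp at this ⊢
        linarith
      · intro k
        refine ⟨(if k = a then 1 else 0) + (if k = b then (1 : ℤ) else 0), ?_⟩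
        push_cast
        rfl
      · have : ∀ k : Fin N, ((if k = a then (1:ℝ) else 0) + (if k = b then (1:ℝ) else 0)) ^ 2
            = (if k = a then (1:ℝ) else 0) + (if k = b then (1:ℝ) else 0) := by
          intro k
          by_cases h1 : k = a
          · subst h1; have : k ≠ b := hab; simp [this]
          · by_cases h2 : k = b <;> simp [h1, h2, Ne.symm hab]
        rw [Finset.sum_congr rfl fun k _ => this k, Finset.sum_add_distrib,
          Finset.sum_ite_eq' Finset.univ a, Finset.sum_ite_eq' Finset.univ b]
        norm_num

end part2

section bwd
variable {N : ℕ} {U : Type*} [AddCommGroup U] [Module ℝ U]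

lemma no_double (ξ : Fin N → Module.Dual ℝ U) {x y : Fin N → ℝ} {p q : Fin N} (hpq : p ≠ q)
    (hpx : x ∈ perp (LinearMap.range (PhiMap ξ))) (hpy : y ∈ perp (LinearMap.range (PhiMap ξ)))
    (hsx : ∀ k, k ≠ p → k ≠ q → x k = 0) (hsy : ∀ k, k ≠ p → k ≠ q → y k = 0)
    (hxa : x p = 1 ∨ x p = -1) (hxb : x q = 1 ∨ x q = -1)
    (hya : y p = 1 ∨ y p = -1) (hyb : y q = 1 ∨ y q = -1)
    (hG : x p * y p + x q * y q = 0) (hnzb : ξ q ≠ 0) : False := by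
  obtain ⟨u, hu⟩ : ∃ u, ξ q u ≠ 0 := by
    by_contra hc
    push_neg at hc
    exact hnzb (LinearMap.ext fun u => hc u)
  have hxu := (mem_perp_iff ξ x).mp hpx u
  have hyu := (mem_perp_iff ξ y).mp hpy u
  rw [sum_support_pair hpq x (fun k => ξ k u) hsx] at hxu
  rw [sum_support_pair hpq y (fun k => ξ k u) hsy] at hyu
  apply hu
  rcases hxa with h1 | h1 <;> rcases hxb with h2 | h2 <;>
    rcases hya with h3 | h3 <;> rcases hyb with h4 | h4 <;>
    rw [h1, h2] at hxu <;> rw [h3, h4] at hyu <;> rw [h1, h2, h3, h4] at hG <;> linarith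

end bwd

section bwd2
variable {N : ℕ} {U : Type*} [AddCommGroup U] [Module ℝ U]

lemma backward1 {m : ℕ} (hm : 2 ≤ m) (ξ : Fin N → Module.Dual ℝ U)
    (hnz : ∀ k, ξ k ≠ 0)
    (w : Fin (m - 1) → (Fin N → ℝ))
    (hw : ∀ i, w i ∈ perp (LinearMap.range (PhiMap ξ)) ∧ ∀ k, ∃ z : ℤ, w i k = z)
    (hGram : ∀ i j : Fin (m - 1), ∑ k, w i k * w j k =
        if i = j then 2
        else if ((i : ℤ) - (j : ℤ) = 1 ∨ (j : ℤ) - (i : ℤ) = 1) then -1 else 0) :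
    ∃ g : Fin m → Fin N, Function.Injective g ∧
      ∀ a b, ξ (g a) = ξ (g b) ∨ ξ (g a) = - ξ (g b) := by
  classical
  have hn1 : 1 ≤ m - 1 := by omega
  have hnorm : ∀ i : Fin (m - 1), ∃ a b, a ≠ b ∧ (w i a = 1 ∨ w i a = -1) ∧
      (w i b = 1 ∨ w i b = -1) ∧ ∀ k, k ≠ a → k ≠ b → w i k = 0 := by
    intro i
    refine normTwo (w i) (hw i).2 ?_
    have := hGram i i
    simpa using this
  choose a b hab ha hb hsupp using hnorm
  have hne : ∀ (i : Fin (m-1)) (k : Fin N), w i k ≠ 0 → (k = a i ∨ k = b i) := by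
    intro i k h
    by_contra hc
    push_neg at hc
    exact h (hsupp i k hc.1 hc.2)
  have hval : ∀ (i : Fin (m-1)) (k : Fin N), w i k ≠ 0 → (w i k = 1 ∨ w i k = -1) := by
    intro i k h
    rcases hne i k h with rfl | rfl
    exacts [ha i, hb i]
  have hane : ∀ i : Fin (m-1), w i (a i) ≠ 0 := by
    intro i; rcases ha i with h | h <;> rw [h] <;> norm_num
  have hbne : ∀ i : Fin (m-1), w i (b i) ≠ 0 := by
    intro i; rcases hb i with h | h <;> rw [h] <;> norm_num
  have hdot : ∀ i j : Fin (m-1), ∑ k, w i k * w j k =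
      w i (a j) * w j (a j) + w i (b j) * w j (b j) := fun i j =>
    sum_support_pair (hab j) (w j) (w i) (hsupp j)
  have hRedge : ∀ i : Fin (m-1), ξ (a i) = ξ (b i) ∨ ξ (a i) = - ξ (b i) := fun i =>
    pairRel ξ (hab i) (hw i).1 (hsupp i) (ha i) (hb i)
  have hRsymm : ∀ {p q : Fin N}, (ξ p = ξ q ∨ ξ p = -ξ q) → (ξ q = ξ p ∨ ξ q = -ξ p) := by
    rintro p q (h | h)
    · exact Or.inl h.symm
    · right; rw [h]; simp
  have hRtrans : ∀ {p q r : Fin N}, (ξ p = ξ q ∨ ξ p = -ξ q) →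
      (ξ q = ξ r ∨ ξ q = -ξ r) → (ξ p = ξ r ∨ ξ p = -ξ r) := by
    rintro p q r (h | h) (h' | h')
    · exact Or.inl (h.trans h')
    · right; rw [h, h']
    · right; rw [h, h']
    · left; rw [h, h']; simp
  -- far-apart edges have disjoint supports
  have hfar : ∀ i j : Fin (m-1), (i.val + 2 ≤ j.val ∨ j.val + 2 ≤ i.val) →
      w i (a j) = 0 ∧ w i (b j) = 0 := by
    intro i j hf
    have hG0 : w i (a j) * w j (a j) + w i (b j) * w j (b j) = 0 := by
      rw [← hdot i j, hGram i j, if_neg (by simp [Fin.ext_iff]; omega), if_neg (by omega)]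
    by_cases h1 : w i (a j) = 0 <;> by_cases h2 : w i (b j) = 0
    · exact ⟨h1, h2⟩
    · exact ⟨h1, by rcases hb j with h | h <;> rw [h1, h] at hG0 <;> linarith⟩
    · exact ⟨by rcases ha j with h | h <;> rw [h2, h] at hG0 <;> linarith, h2⟩
    · exfalso
      have hsx : ∀ k, k ≠ a j → k ≠ b j → w i k = 0 := by
        intro k hk1 hk2
        by_contra h0
        have hk : k = a i ∨ k = b i := hne i k h0
        have haj : a j = a i ∨ a j = b i := hne i (a j) h1
        have hbj : b j = a i ∨ b j = b i := hne i (b j) h2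
        have habj : a j ≠ b j := hab j
        rcases hk with rfl | rfl <;> rcases haj with h3 | h3 <;>
          rcases hbj with h4 | h4 <;> simp_all
      exact no_double ξ (hab j) (hw i).1 (hw j).1 hsx (hsupp j)
        (hval i (a j) h1) (hval i (b j) h2) (ha j) (hb j) hG0 (hnz (b j))
  -- adjacent edges share exactly one endpoint
  have hadj : ∀ i j : Fin (m-1), j.val + 1 = i.val →
      (w j (a i) ≠ 0 ∧ w j (b i) = 0) ∨ (w j (a i) = 0 ∧ w j (b i) ≠ 0) := by
    intro i j hji
    have hG1 : w j (a i) * w i (a i) + w j (b i) * w i (b i) = -1 := by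
      rw [← hdot j i, hGram j i, if_neg (by simp [Fin.ext_iff]; omega),
        if_pos (by right; omega)]
    by_cases h1 : w j (a i) = 0 <;> by_cases h2 : w j (b i) = 0
    · rw [h1, h2] at hG1; norm_num at hG1
    · exact Or.inr ⟨h1, h2⟩
    · exact Or.inl ⟨h1, h2⟩
    · exfalso
      rcases hval j (a i) h1 with h3 | h3 <;> rcases hval j (b i) h2 with h4 | h4 <;>
        rcases ha i with h5 | h5 <;> rcases hb i with h6 | h6 <;>
        rw [h3, h4, h5, h6] at hG1 <;> norm_num at hG1
  -- the union of supports
  set e : ℕ → Finset (Fin N) :=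
    fun i => if h : i < m - 1 then {a ⟨i, h⟩, b ⟨i, h⟩} else ∅ with hedef
  set T : ℕ → Finset (Fin N) := fun k => (Finset.range k).biUnion e with hTdef
  have hmemT : ∀ (kk : ℕ) (x : Fin N), x ∈ T kk ↔
      ∃ i : Fin (m - 1), i.val < kk ∧ (x = a i ∨ x = b i) := by
    intro kk x
    rw [hTdef]
    simp only [Finset.mem_biUnion, Finset.mem_range]
    constructor
    · rintro ⟨i, hik, hx⟩
      by_cases h : i < m - 1
      · refine ⟨⟨i, h⟩, hik, ?_⟩
        simpa [hedef, h, Finset.mem_insert, Finset.mem_singleton] using hx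
      · rw [hedef] at hx; simp [h] at hx
    · rintro ⟨i, hik, hx⟩
      refine ⟨i.val, hik, ?_⟩
      rw [hedef]
      simp only [i.isLt, dif_pos]
      rcases hx with rfl | rfl <;> simp [Fin.eta]
  have hTstep : ∀ (k : ℕ) (h : k < m - 1),
      T (k + 1) = ({a ⟨k, h⟩, b ⟨k, h⟩} : Finset (Fin N)) ∪ T k := by
    intro k h
    rw [hTdef]
    simp only
    rw [Finset.range_add_one, Finset.biUnion_insert]
    congr 1
    rw [hedef]
    simp [h]
  -- main induction
  have main : ∀ k : ℕ, 1 ≤ k → k ≤ m - 1 → (T k).card = k + 1 ∧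
      ∀ x ∈ T k, ∀ y ∈ T k, ξ x = ξ y ∨ ξ x = -ξ y := by
    intro k
    induction k with
    | zero => omega
    | succ k IH =>
      intro _ hk1
      by_cases hk0 : k = 0
      · subst hk0
        have h0 : (0 : ℕ) < m - 1 := hn1
        have hT1 : T 1 = ({a ⟨0, h0⟩, b ⟨0, h0⟩} : Finset (Fin N)) := by
          rw [hTstep 0 h0]
          rw [hTdef]
          simp
        constructor
        · rw [hT1, Finset.card_pair (hab ⟨0, h0⟩)]
        · intro x hx y hy
          rw [hT1, Finset.mem_insert, Finset.mem_singleton] at hx hy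
          rcases hx with rfl | rfl <;> rcases hy with rfl | rfl
          · exact Or.inl rfl
          · exact hRedge _
          · exact hRsymm (hRedge _)
          · exact Or.inl rfl
      · have hk : 1 ≤ k := by omega
        have hkn : k < m - 1 := by omega
        obtain ⟨hcard, hrel⟩ := IH hk (by omega)
        set K : Fin (m - 1) := ⟨k, hkn⟩ with hK
        set P : Fin (m - 1) := ⟨k - 1, by omega⟩ with hP
        have hPK : P.val + 1 = K.val := by simp [hP, hK]; omega
        -- find old (in T k) and new (not in T k) endpoints of edge K
        have hsplit : ∃ old new : Fin N,
            ({a K, b K} : Finset (Fin N)) = {old, new} ∧ old ∈ T k ∧ new ∉ T k ∧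
            (ξ old = ξ new ∨ ξ old = -ξ new) := by
          have hnotmem : ∀ c : Fin N, w P c = 0 → (c = a K ∨ c = b K) → c ∉ T k := by
            intro c hc hcK hmem
            rw [hmemT] at hmem
            obtain ⟨i, hik, hi⟩ := hmem
            have hwic : w i c ≠ 0 := by
              rcases hi with rfl | rfl
              exacts [hane i, hbne i]
            by_cases hiP : i = P
            · rw [hiP] at hwic; exact hwic hc
            · have : i.val + 2 ≤ K.val ∨ K.val + 2 ≤ i.val := by
                have : i.val ≠ P.val := fun h => hiP (Fin.ext h)
                simp only [hP] at this
                simp only [hK]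
                omega
              have hz := hfar i K this
              rcases hcK with rfl | rfl
              exacts [hwic hz.1, hwic hz.2]
          have hmm : ∀ c : Fin N, w P c ≠ 0 → (c = a K ∨ c = b K) → c ∈ T k := by
            intro c hc _
            rw [hmemT]
            exact ⟨P, by simp [hP]; omega, hne P c hc⟩
          rcases hadj K P hPK with ⟨h1, h2⟩ | ⟨h1, h2⟩
          · exact ⟨a K, b K, rfl, hmm _ h1 (Or.inl rfl), hnotmem _ h2 (Or.inr rfl),
              hRedge K⟩
          · exact ⟨b K, a K, Finset.pair_comm _ _, hmm _ h2 (Or.inr rfl),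
              hnotmem _ h1 (Or.inl rfl), hRsymm (hRedge K)⟩
        obtain ⟨old, new, hpair, hold, hnew, hRon⟩ := hsplit
        have hT1 : T (k + 1) = insert new (T k) := by
          rw [hTstep k hkn, hpair]
          ext x
          simp only [Finset.mem_union, Finset.mem_insert, Finset.mem_singleton]
          constructor
          · rintro ((rfl | rfl) | hx)
            · exact Or.inr hold
            · exact Or.inl rfl
            · exact Or.inr hx
          · rintro (rfl | hx)
            · exact Or.inl (Or.inr rfl)
            · exact Or.inr hx
        constructor
        · rw [hT1, Finset.card_insert_of_notMem hnew, hcard]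
        · intro x hx y hy
          rw [hT1, Finset.mem_insert] at hx hy
          rcases hx with rfl | hx <;> rcases hy with rfl | hy
          · exact Or.inl rfl
          · exact hRtrans (hRsymm hRon) (hrel old hold y hy)
          · exact hRtrans (hrel x hx old hold) hRon
          · exact hrel x hx y hy
  obtain ⟨hcard, hrel⟩ := main (m - 1) hn1 le_rfl
  have hcm : (T (m - 1)).card = m := by rw [hcard]; omega
  set φ := (T (m - 1)).orderIsoOfFin hcm with hφ
  refine ⟨fun i => (φ i : Fin N), ?_, ?_⟩
  · intro x y hxy
    exact φ.injective (Subtype.coe_injective hxy)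
  · intro p q
    exact hrel _ (φ p).2 _ (φ q).2

end bwd2

/-- `Ω` has `m` mutually equal elements (up to sign) iff the lattice
`L_{Ω^⊥} = W_Ω^⊥ ∩ ℤᴺ` of the Gale dual contains a root sublattice of type `A_{m−1}`
(given by vectors whose Gram matrix is the Cartan matrix of `A_{m−1}`); in particular
`Ω` has no repeated elements iff `L_{Ω^⊥}` contains no vector of squared length `2`. -/
theorem stmt17 {N m : ℕ} (hm : 2 ≤ m) {U : Type*} [AddCommGroup U] [Module ℝ U]
    [FiniteDimensional ℝ U]
    (ξ : Fin N → Module.Dual ℝ U) (M : Submodule ℤ (Module.Dual ℝ U))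
    (hsys : IsUnimodularSystem ξ M) :
    ((∃ g : Fin m → Fin N, Function.Injective g ∧
        ∀ a b, ξ (g a) = ξ (g b) ∨ ξ (g a) = - ξ (g b)) ↔
      (∃ w : Fin (m - 1) → (Fin N → ℝ),
        (∀ i, w i ∈ perp (LinearMap.range (PhiMap ξ)) ∧ ∀ k, ∃ z : ℤ, w i k = z) ∧
        ∀ i j : Fin (m - 1), ∑ k, w i k * w j k =
          if i = j then 2
          else if ((i : ℤ) - (j : ℤ) = 1 ∨ (j : ℤ) - (i : ℤ) = 1) then -1 else 0)) ∧
    ((∀ a b : Fin N, a ≠ b → ξ a ≠ ξ b ∧ ξ a ≠ - ξ b) ↔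
      ¬ ∃ x : Fin N → ℝ, x ∈ perp (LinearMap.range (PhiMap ξ)) ∧
          (∀ k, ∃ z : ℤ, x k = z) ∧ ∑ k, x k ^ 2 = 2) := by
  obtain ⟨hnz, -, -⟩ := hsys
  constructor
  · constructor
    · rintro ⟨g, hg, hrel⟩
      exact forward1 hm ξ g hg hrel
    · rintro ⟨w, hw, hGram⟩
      exact backward1 hm ξ hnz w hw hGram
  · exact part2 ξ
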